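/- arXiv:1608.05145 — 3 statements merged into one kernel-verified Lean document; each statement's English description precedes it below -/
import Mathlib

section
/- Let f be strictly convex and strictly increasing on [K1,K3], and suppose P(K3) > P(K1). Define the interpolated price P(K2) = P(K1) + (P(K3)-P(K1))(f(K2)-f(K1))/(f(K3)-f(K1)) for K1 < K2 < K3. Then the butterfly no-arbitrage condition holds: (K3-K2)P(K1) - (K3-K1)P(K2) + (K2-K1)P(K3) > 0. -/
/-!
Writing `K2` as a convex combination of `K1` and `K3`, strict convexity of `f` says that
`(f K2 - f K1) / (f K3 - f K1)` is strictly less than the linear weight `(K2 - K1) / (K3 - K1)`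
(the denominator is positive since `f` increases). Hence the interpolated price lies strictly
below the chord through `(K1, P1)` and `(K3, P3)`, and the butterfly spread is `K3 - K1` times
the gap between chord and price.
-/

theorem StrictConvexOn.sub_div_sub_lt_sub_div_sub {𝕜 : Type*} [Field 𝕜] [LinearOrder 𝕜]
    [IsStrictOrderedRing 𝕜] {s : Set 𝕜} {f : 𝕜 → 𝕜} (hf : StrictConvexOn 𝕜 s f) {x y z : 𝕜}
    (hx : x ∈ s) (hz : z ∈ s) (hxy : x < y) (hyz : y < z) (hfxz : f x < f z) :
    (f y - f x) / (f z - f x) < (y - x) / (z - x) := by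
  rw [div_lt_div_iff₀ (sub_pos.2 hfxz) (sub_pos.2 (hxy.trans hyz))]
  linear_combination hf.secant_strict_mono_aux1 hx hz hxy hyz

theorem butterfly_pos_of_lt_chord {𝕜 : Type*} [Field 𝕜] [LinearOrder 𝕜] [IsStrictOrderedRing 𝕜]
    {K1 K2 K3 P1 P2 P3 : 𝕜} (hK : K1 < K3)
    (hP2 : P2 < P1 + (P3 - P1) * ((K2 - K1) / (K3 - K1))) :
    0 < (K3 - K2) * P1 - (K3 - K1) * P2 + (K2 - K1) * P3 := by
  have hK' : 0 < K3 - K1 := sub_pos.2 hK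
  have hspread : (K3 - K2) * P1 - (K3 - K1) * P2 + (K2 - K1) * P3
      = (K3 - K1) * (P1 + (P3 - P1) * ((K2 - K1) / (K3 - K1)) - P2) := by
    field_simp
    ring
  rw [hspread]
  exact mul_pos hK' (sub_pos.2 hP2)

/-- If the interpolation variable is transformed by a strictly convex and
strictly increasing function `f` on `[K1,K3]`, and `P(K1) < P(K3)`, then the
interpolated price satisfies the strict butterfly no-arbitrage condition. -/
theorem convex_interpolation_butterfly
    (K1 K2 K3 P1 P3 : ℝ) (h12 : K1 < K2) (h23 : K2 < K3)
    (f : ℝ → ℝ)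
    (hconv : StrictConvexOn ℝ (Set.Icc K1 K3) f)
    (hmono : StrictMonoOn f (Set.Icc K1 K3))
    (hP : P1 < P3)
    (P2 : ℝ)
    (hP2 : P2 = P1 + (P3 - P1) * (f K2 - f K1) / (f K3 - f K1)) :
    (K3 - K2) * P1 - (K3 - K1) * P2 + (K2 - K1) * P3 > 0 := by
  have h13 : K1 < K3 := h12.trans h23
  have hK1 : K1 ∈ Set.Icc K1 K3 := Set.left_mem_Icc.2 h13.le
  have hK3 : K3 ∈ Set.Icc K1 K3 := Set.right_mem_Icc.2 h13.le
  have hweight := hconv.sub_div_sub_lt_sub_div_sub hK1 hK3 h12 h23 (hmono hK1 hK3 h13)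
  refine butterfly_pos_of_lt_chord h13 ?_
  rw [hP2, mul_div_assoc]
  gcongr
end

section
/- Let P be the put price in the Black–Scholes-type setting, K = S e^{X + (r-q)T}, and define B(X,T) = e^{-X/2}(K e^{-rT} − P)/(S e^{-qT}). If P satisfies the Dupire forward equation P_T = (1/2)σ²(K,T)K² P_{KK} − (r−q)K P_K − q P with σ²(K,T) = v(X,T) depending on K,T only through X and T, then B satisfies B_T − (1/2) v B_{XX} + (1/8) v B = 0. -/
/-- Change of variables in the Dupire forward equation.  With
`K = S e^{X + (r-q)T}` and `B(X,T) = e^{-X/2}(K e^{-rT} - P(K,T))/(S e^{-qT})`,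
if `P` satisfies Dupire's equation
`P_T = (1/2) σ²(K,T) K² P_{KK} - (r-q) K P_K - q P`
with `σ²(K,T) = v(X,T)` depending on `(K,T)` only through `(X,T)`, then `B`
satisfies `B_T - (1/2) v B_{XX} + (1/8) v B = 0`. -/
theorem dupire_change_of_variables
    (S r q : ℝ) (hS : 0 < S) (hr : 0 < r) (hq : 0 < q)
    (P : ℝ → ℝ → ℝ) (v : ℝ → ℝ → ℝ)
    (hP : ContDiff ℝ (⊤ : ℕ∞) (Function.uncurry P))
    (hDupire : ∀ K T : ℝ, 0 < K → 0 < T →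
      deriv (fun t => P K t) T =
        (1/2) * v (Real.log (K / (S * Real.exp ((r - q) * T)))) T * K ^ 2 *
          deriv (deriv (fun k => P k T)) K
        - (r - q) * K * deriv (fun k => P k T) K
        - q * P K T)
    (B : ℝ → ℝ → ℝ)
    (hB : ∀ X T : ℝ, B X T =
      Real.exp (-X/2) *
        (S * Real.exp (X + (r - q) * T) * Real.exp (-r * T)
          - P (S * Real.exp (X + (r - q) * T)) T) / (S * Real.exp (-q * T))) :
    ∀ X T : ℝ, 0 < T →
      deriv (fun t => B X t) T
        - (1/2) * v X T * deriv (deriv (fun x => B x T)) X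
        + (1/8) * v X T * B X T = 0 := by
  intro X T hT
  have hS0 : S ≠ 0 := ne_of_gt hS
  -- Simplified formula for B
  have hBf : ∀ x t : ℝ, B x t =
      Real.exp (x/2) - Real.exp (q*t) / S *
        (Real.exp (-(x/2)) * P (S * Real.exp (x + (r - q) * t)) t) := by
    intro x t
    rw [hB]
    have ha := (Real.exp_pos (x/2)).ne'
    have hb := (Real.exp_pos (r*t)).ne'
    have hc := (Real.exp_pos (q*t)).ne'
    have e1 : Real.exp (-x/2) = (Real.exp (x/2))⁻¹ := by
      rw [neg_div, Real.exp_neg]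
    have e2 : Real.exp (x + (r-q)*t)
        = Real.exp (x/2) * Real.exp (x/2) * Real.exp (r*t) * (Real.exp (q*t))⁻¹ := by
      rw [← Real.exp_neg, ← Real.exp_add, ← Real.exp_add, ← Real.exp_add]
      congr 1; ring
    have e3 : Real.exp (-r*t) = (Real.exp (r*t))⁻¹ := by
      rw [neg_mul, Real.exp_neg]
    have e4 : Real.exp (-q*t) = (Real.exp (q*t))⁻¹ := by
      rw [neg_mul, Real.exp_neg]
    have e5 : Real.exp (-(x/2)) = (Real.exp (x/2))⁻¹ := Real.exp_neg _
    rw [e1, e2, e3, e4, e5]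
    field_simp
  -- smoothness in the first variable
  have hPt : ∀ t : ℝ, ContDiff ℝ (⊤ : ℕ∞) (fun k' => P k' t) := fun t =>
    hP.comp (contDiff_id.prodMk contDiff_const)
  have hPk : ∀ (k0 t : ℝ),
      HasDerivAt (fun k' => P k' t) (deriv (fun k' => P k' t) k0) k0 := fun k0 t =>
    (((hPt t).differentiable (by simp)) k0).hasDerivAt
  have hPkk : ∀ (k0 t : ℝ),
      HasDerivAt (deriv (fun k' => P k' t)) (deriv (deriv (fun k' => P k' t)) k0) k0 := fun k0 t =>
    ((((contDiff_infty_iff_deriv.mp ((hPt t).of_le (by simp))).2).differentiable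
        (by simp)) k0).hasDerivAt
  -- derivative of the spot curve
  have hkx : ∀ x : ℝ, HasDerivAt (fun x' => S * Real.exp (x' + (r - q) * T))
      (S * Real.exp (x + (r - q) * T)) x := by
    intro x
    have h1 : HasDerivAt (fun x' : ℝ => x' + (r - q) * T) 1 x := (hasDerivAt_id x).add_const _
    simpa using h1.exp.const_mul S
  have hkt : HasDerivAt (fun t' => S * Real.exp (X + (r - q) * t'))
      (S * Real.exp (X + (r - q) * T) * (r - q)) T := by
    have h1 : HasDerivAt (fun t' : ℝ => X + (r - q) * t') (r - q) T := by
      simpa using ((hasDerivAt_id T).const_mul (r - q)).const_add X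
    simpa [mul_assoc] using h1.exp.const_mul S
  -- compositions in the x-direction
  have hPcomp : ∀ x : ℝ, HasDerivAt (fun x' => P (S * Real.exp (x' + (r - q) * T)) T)
      (deriv (fun k' => P k' T) (S * Real.exp (x + (r - q) * T)) *
        (S * Real.exp (x + (r - q) * T))) x := fun x =>
    (hPk _ T).comp x (hkx x)
  have hPKcomp : ∀ x : ℝ, HasDerivAt
      (fun x' => deriv (fun k' => P k' T) (S * Real.exp (x' + (r - q) * T)))
      (deriv (deriv (fun k' => P k' T)) (S * Real.exp (x + (r - q) * T)) *
        (S * Real.exp (x + (r - q) * T))) x := fun x =>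
    (hPkk _ T).comp x (hkx x)
  -- exponential helpers
  have h2X : ∀ x : ℝ, HasDerivAt (fun x' : ℝ => Real.exp (-(x'/2)))
      (Real.exp (-(x/2)) * -(1/2)) x := fun x =>
    (((hasDerivAt_id x).div_const 2).neg).exp
  have h1X : ∀ x : ℝ, HasDerivAt (fun x' : ℝ => Real.exp (x'/2))
      (Real.exp (x/2) * (1/2)) x := fun x =>
    ((hasDerivAt_id x).div_const 2).exp
  -- first x-derivative of B(·,T)
  have hBx : ∀ x : ℝ, HasDerivAt (fun x' => B x' T)
      (Real.exp (x/2) * (1/2) -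
        Real.exp (q*T) / S *
          (Real.exp (-(x/2)) * -(1/2) * P (S * Real.exp (x + (r - q) * T)) T +
           Real.exp (-(x/2)) *
             (deriv (fun k' => P k' T) (S * Real.exp (x + (r - q) * T)) *
               (S * Real.exp (x + (r - q) * T))))) x := by
    intro x
    have hfun : (fun x' => B x' T) = fun x' =>
        Real.exp (x'/2) - Real.exp (q*T) / S *
          (Real.exp (-(x'/2)) * P (S * Real.exp (x' + (r - q) * T)) T) :=
      funext fun x' => hBf x' T
    rw [hfun]
    exact (h1X x).sub (((h2X x).mul (hPcomp x)).const_mul (Real.exp (q*T) / S))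
  have hBxfun : deriv (fun x' => B x' T) = fun x =>
      Real.exp (x/2) * (1/2) -
        Real.exp (q*T) / S *
          (Real.exp (-(x/2)) * -(1/2) * P (S * Real.exp (x + (r - q) * T)) T +
           Real.exp (-(x/2)) *
             (deriv (fun k' => P k' T) (S * Real.exp (x + (r - q) * T)) *
               (S * Real.exp (x + (r - q) * T)))) :=
    funext fun x => (hBx x).deriv
  -- second x-derivative of B(·,T) at X
  have hBXX : deriv (deriv (fun x' => B x' T)) X =
      Real.exp (X/2) * (1/2) * (1/2) -
        Real.exp (q*T) / S *
          ((Real.exp (-(X/2)) * -(1/2) * -(1/2) * P (S * Real.exp (X + (r - q) * T)) T +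
            Real.exp (-(X/2)) * -(1/2) *
              (deriv (fun k' => P k' T) (S * Real.exp (X + (r - q) * T)) *
                (S * Real.exp (X + (r - q) * T)))) +
           (Real.exp (-(X/2)) * -(1/2) *
              (deriv (fun k' => P k' T) (S * Real.exp (X + (r - q) * T)) *
                (S * Real.exp (X + (r - q) * T))) +
            Real.exp (-(X/2)) *
              (deriv (deriv (fun k' => P k' T)) (S * Real.exp (X + (r - q) * T)) *
                 (S * Real.exp (X + (r - q) * T)) * (S * Real.exp (X + (r - q) * T)) +
               deriv (fun k' => P k' T) (S * Real.exp (X + (r - q) * T)) *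
                 (S * Real.exp (X + (r - q) * T))))) := by
    rw [hBxfun]
    exact (((h1X X).mul_const (1/2)).sub
      (((((h2X X).mul_const (-(1/2))).mul (hPcomp X)).add
        ((h2X X).mul ((hPKcomp X).mul (hkx X)))).const_mul (Real.exp (q*T) / S))).deriv
  -- joint derivative in the t-direction
  have hFd : HasFDerivAt (Function.uncurry P)
      (fderiv ℝ (Function.uncurry P) (S * Real.exp (X + (r - q) * T), T))
      (S * Real.exp (X + (r - q) * T), T) :=
    ((hP.differentiable (by simp)) _).hasFDerivAt
  have hp1 : HasDerivAt (fun k' => P k' T)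
      (fderiv ℝ (Function.uncurry P) (S * Real.exp (X + (r - q) * T), T) (1, 0))
      (S * Real.exp (X + (r - q) * T)) :=
    hFd.comp_hasDerivAt_of_eq (S * Real.exp (X + (r - q) * T))
      ((hasDerivAt_id (S * Real.exp (X + (r - q) * T))).prodMk
        (hasDerivAt_const (S * Real.exp (X + (r - q) * T)) T)) rfl
  have hp2 : HasDerivAt (fun t' => P (S * Real.exp (X + (r - q) * T)) t')
      (fderiv ℝ (Function.uncurry P) (S * Real.exp (X + (r - q) * T), T) (0, 1)) T :=
    hFd.comp_hasDerivAt_of_eq T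
      ((hasDerivAt_const T (S * Real.exp (X + (r - q) * T))).prodMk (hasDerivAt_id T)) rfl
  have hjoint : HasDerivAt (fun t' => P (S * Real.exp (X + (r - q) * t')) t')
      (S * Real.exp (X + (r - q) * T) * (r - q) *
          deriv (fun k' => P k' T) (S * Real.exp (X + (r - q) * T)) +
        deriv (fun t' => P (S * Real.exp (X + (r - q) * T)) t') T) T := by
    have hcurve : HasDerivAt (fun t' => (S * Real.exp (X + (r - q) * t'), t'))
        (S * Real.exp (X + (r - q) * T) * (r - q), 1) T := hkt.prodMk (hasDerivAt_id T)
    have hcomp := HasFDerivAt.comp_hasDerivAt_of_eq T hFd hcurve rfl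
    have hsplit : (S * Real.exp (X + (r - q) * T) * (r - q), (1:ℝ)) =
        (S * Real.exp (X + (r - q) * T) * (r - q)) • ((1:ℝ), (0:ℝ)) + ((0:ℝ), (1:ℝ)) := by
      simp
    rw [hsplit, map_add, map_smul, smul_eq_mul, ← hp1.deriv, ← hp2.deriv] at hcomp
    exact hcomp
  -- t-derivative of B(X,·) at T
  have hqS : HasDerivAt (fun t => Real.exp (q*t) / S) (Real.exp (q*T) * q / S) T := by
    have h1 : HasDerivAt (fun t : ℝ => q * t) q T := by
      simpa using (hasDerivAt_id T).const_mul q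
    exact h1.exp.div_const S
  have hBT : deriv (fun t => B X t) T =
      0 - (Real.exp (q*T) * q / S *
            (Real.exp (-(X/2)) * P (S * Real.exp (X + (r - q) * T)) T) +
          Real.exp (q*T) / S *
            (Real.exp (-(X/2)) *
              (S * Real.exp (X + (r - q) * T) * (r - q) *
                  deriv (fun k' => P k' T) (S * Real.exp (X + (r - q) * T)) +
                deriv (fun t' => P (S * Real.exp (X + (r - q) * T)) t') T))) := by
    have hfun : (fun t => B X t) = fun t =>
        Real.exp (X/2) - Real.exp (q*t) / S *
          (Real.exp (-(X/2)) * P (S * Real.exp (X + (r - q) * t)) t) :=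
      funext fun t => hBf X t
    rw [hfun]
    exact ((hasDerivAt_const T (Real.exp (X/2))).sub
      (hqS.mul (hjoint.const_mul (Real.exp (-(X/2)))))).deriv
  -- Dupire equation at the point
  have hlog : Real.log (S * Real.exp (X + (r - q) * T) / (S * Real.exp ((r - q) * T))) = X := by
    rw [mul_div_mul_left _ _ hS0, ← Real.exp_sub,
      show X + (r - q) * T - (r - q) * T = X by ring, Real.log_exp]
  have hDu := hDupire (S * Real.exp (X + (r - q) * T)) T (by positivity) hT
  rw [hlog] at hDu
  rw [hBT, hBXX, hBf X T, hDu]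
  ring
end

section
/- The function Π(x) = φ(x)·I₁(2φ(x)) with φ(x)² = −2k(x−μ), on the domain where φ(x)² > 0, also solves (x−μ)Π''(x) + 2k·Π(x) = 0. -/
/-!
With `c = -2k` and `F(u) = √u · I₁(2√u)`, the boundary function is `Π(x) = F(c(x - μ))`,
so `Π''(x) = c² F''(c(x - μ))` and `(x - μ) Π'' + 2k Π = c · (u F''(u) - F(u))` at
`u = c(x - μ)`. The substitution `t = 2√u` turns the modified Bessel equation of order 1
for `I₁` into `u F'' = F`.
-/

open Real Set

section AffineChange

variable {𝕜 : Type*} [NontriviallyNormedField 𝕜]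

theorem deriv_comp_mul_sub (c a : 𝕜) (f : 𝕜 → 𝕜) :
    deriv (fun x => f (c * (x - a))) = fun x => c * deriv f (c * (x - a)) := by
  funext x
  rw [deriv_comp_sub_const (f := fun y => f (c * y)), deriv_comp_mul_left, smul_eq_mul]

theorem deriv_deriv_comp_mul_sub (c a x : 𝕜) (f : 𝕜 → 𝕜) :
    deriv (deriv fun x => f (c * (x - a))) x = c ^ 2 * deriv (deriv f) (c * (x - a)) := by
  rw [deriv_comp_mul_sub, deriv_const_mul_field, congrFun (deriv_comp_mul_sub c a _) x]
  ring

end AffineChange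

theorem ContDiffOn.hasDerivAt_and_hasDerivAt_deriv {f : ℝ → ℝ} {s : Set ℝ} {t : ℝ}
    (hf : ContDiffOn ℝ 2 f s) (hs : IsOpen s) (ht : t ∈ s) :
    HasDerivAt f (deriv f t) t ∧ HasDerivAt (deriv f) (deriv (deriv f) t) t := by
  have hmem : s ∈ nhds t := hs.mem_nhds ht
  have hf' : ContDiffOn ℝ 1 (deriv f) s := hf.deriv_of_isOpen hs (by norm_num)
  exact ⟨((hf.differentiableOn (by norm_num)).differentiableAt hmem).hasDerivAt,
    ((hf'.differentiableOn (by norm_num)).differentiableAt hmem).hasDerivAt⟩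

theorem HasDerivAt.comp_two_sqrt {h : ℝ → ℝ} {h' u : ℝ} (hu : 0 < u)
    (hh : HasDerivAt h h' (2 * √u)) :
    HasDerivAt (fun v => h (2 * √v)) (h' / √u) u := by
  have hsu : √u ≠ 0 := (sqrt_pos.mpr hu).ne'
  refine (hh.comp u ((hasDerivAt_sqrt hu.ne').const_mul 2)).congr_deriv ?_
  field_simp

section BesselSubstitution

variable {I : ℝ → ℝ}

theorem hasDerivAt_sqrt_mul_comp_two_sqrt {u : ℝ} (hu : 0 < u)
    (hI : HasDerivAt I (deriv I (2 * √u)) (2 * √u)) :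
    HasDerivAt (fun v => √v * I (2 * √v)) (I (2 * √u) / (2 * √u) + deriv I (2 * √u)) u := by
  have hsu : √u ≠ 0 := (sqrt_pos.mpr hu).ne'
  refine ((hasDerivAt_sqrt hu.ne').mul (hI.comp_two_sqrt hu)).congr_deriv ?_
  field_simp

theorem mul_deriv_deriv_sqrt_mul_comp_two_sqrt (hI : ContDiffOn ℝ 2 I (Ioi 0))
    (hBessel : ∀ t : ℝ, 0 < t →
      t ^ 2 * deriv (deriv I) t + t * deriv I t - (t ^ 2 + 1) * I t = 0)
    {u : ℝ} (hu : 0 < u) :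
    u * deriv (deriv fun v => √v * I (2 * √v)) u = √u * I (2 * √u) := by
  have hsu : 0 < √u := sqrt_pos.mpr hu
  have ht : 0 < 2 * √u := by positivity
  have hderiv : deriv (fun v => √v * I (2 * √v)) =ᶠ[nhds u]
      fun v => I (2 * √v) / (2 * √v) + deriv I (2 * √v) := by
    filter_upwards [isOpen_Ioi.mem_nhds hu] with v hv
    have htv : 2 * √v ∈ Ioi 0 := mul_pos two_pos (sqrt_pos.mpr hv)
    exact (hasDerivAt_sqrt_mul_comp_two_sqrt hv
      (hI.hasDerivAt_and_hasDerivAt_deriv isOpen_Ioi htv).1).deriv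
  obtain ⟨hI₁, hI₂⟩ := hI.hasDerivAt_and_hasDerivAt_deriv isOpen_Ioi ht
  have hsecond : HasDerivAt (fun v => I (2 * √v) / (2 * √v) + deriv I (2 * √v)) _ u :=
    ((hI₁.comp_two_sqrt hu).div ((hasDerivAt_sqrt hu.ne').const_mul 2) ht.ne').add
      (hI₂.comp_two_sqrt hu)
  rw [hderiv.deriv_eq, hsecond.deriv]
  have hsq : √u ^ 2 = u := sq_sqrt hu.le
  field_simp
  linear_combination √u ^ 2 * hBessel _ ht - (2 * √u * deriv I (2 * √u) - I (2 * √u) +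
    4 * √u ^ 2 * deriv (deriv I) (2 * √u)) * hsq

end BesselSubstitution

theorem boundary_function_I1_solves_ODE_general
    (k μ : ℝ)
    (I₁ : ℝ → ℝ)
    (hsmooth : ContDiffOn ℝ 2 I₁ (Set.Ioi 0))
    (hBessel : ∀ t : ℝ, 0 < t →
      t ^ 2 * deriv (deriv I₁) t + t * deriv I₁ t - (t ^ 2 + 1) * I₁ t = 0) :
    ∀ x : ℝ, 0 < -2 * k * (x - μ) →
      (x - μ) *
        deriv (deriv (fun x => Real.sqrt (-2 * k * (x - μ)) *
          I₁ (2 * Real.sqrt (-2 * k * (x - μ))))) x +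
      2 * k * (Real.sqrt (-2 * k * (x - μ)) *
        I₁ (2 * Real.sqrt (-2 * k * (x - μ)))) = 0 := by
  intro x hx
  rw [deriv_deriv_comp_mul_sub (-2 * k) μ x fun u => √u * I₁ (2 * √u)]
  linear_combination (-2 * k) * mul_deriv_deriv_sqrt_mul_comp_two_sqrt hsmooth hBessel hx

/-- The boundary function `Π(x) = φ(x) I₁(2φ(x))` with `φ(x) = √(−2k(x−μ))`
solves `(x−μ) Π'' + 2k Π = 0` on the domain `{x : −2k(x−μ) > 0}`, where `I₁`
is a solution of the modified Bessel equation of order 1 (first kind). -/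
theorem boundary_function_I1_solves_ODE
    (k μ : ℝ) (hk : k = 1/2 ∨ k = -1/2)
    (I₁ : ℝ → ℝ)
    (hsmooth : ContDiffOn ℝ 2 I₁ (Set.Ioi 0))
    (hBessel : ∀ t : ℝ, 0 < t →
      t ^ 2 * deriv (deriv I₁) t + t * deriv I₁ t - (t ^ 2 + 1) * I₁ t = 0) :
    ∀ x : ℝ, 0 < -2 * k * (x - μ) →
      (x - μ) *
        deriv (deriv (fun x => Real.sqrt (-2 * k * (x - μ)) *
          I₁ (2 * Real.sqrt (-2 * k * (x - μ))))) x +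
      2 * k * (Real.sqrt (-2 * k * (x - μ)) *
        I₁ (2 * Real.sqrt (-2 * k * (x - μ)))) = 0 :=
  boundary_function_I1_solves_ODE_general k μ I₁ hsmooth hBessel
end
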